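/- arXiv:1606.06176 — 4 statements merged into one kernel-verified Lean document; each statement's English description precedes it below -/
import Mathlib

section
/- Let W be a smooth vector field on 𝕋³ satisfying curl W = N W for some real number N ≠ 0. Then div W = 0, ΔW = −N²W, and the pair u(x,t) := e^{−νN²t} W(x), P(x,t) := −½ e^{−2νN²t} |W(x)|², is a smooth global solution of the Navier–Stokes equations with viscosity ν > 0 on 𝕋³ × [0,∞) with initial datum W; that is, ∂_t u + (u·∇)u − νΔu = −∇P, div u = 0 and u(·,0) = W. -/
open MeasureTheory Real Set

noncomputable section

abbrev E3 := Fin 3 → ℝ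

def T3 : Set E3 := Set.Icc 0 (fun _ => 2 * Real.pi)

def SpacePeriodic {ι : Type*} (f : E3 → ι) : Prop :=
  ∀ (x : E3) (j : Fin 3), f (x + (2 * Real.pi) • (Pi.single j 1 : E3)) = f x

def pd (j : Fin 3) (f : E3 → ℝ) : E3 → ℝ := fun x => fderiv ℝ f x (Pi.single j 1 : E3)

def pdM (β : Fin 3 → ℕ) (f : E3 → ℝ) : E3 → ℝ :=
  (pd 0)^[β 0] ((pd 1)^[β 1] ((pd 2)^[β 2] f))

def midx (m : ℕ) : Finset (Fin 3 → ℕ) := Finset.Nat.antidiagonalTuple 3 m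

def gradSq {ι : Type*} [Fintype ι] (m : ℕ) (f : E3 → ι → ℝ) (x : E3) : ℝ :=
  ∑ i : ι, ∑ β ∈ midx m, (pdM β (fun y => f y i) x) ^ 2

def HnormSq {ι : Type*} [Fintype ι] (r : ℕ) (f : E3 → ι → ℝ) : ℝ :=
  ∑ m ∈ Finset.range (r + 1), ∫ x in T3, gradSq m f x

def Hnorm {ι : Type*} [Fintype ι] (r : ℕ) (f : E3 → ι → ℝ) : ℝ :=
  Real.sqrt (HnormSq r f)

def L2norm {ι : Type*} [Fintype ι] (f : E3 → ι → ℝ) : ℝ := Hnorm 0 f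

def LinfGrad {ι : Type*} [Fintype ι] (m : ℕ) (f : E3 → ι → ℝ) : ℝ :=
  ⨆ x : E3, Real.sqrt (gradSq m f x)

def Linf {ι : Type*} [Fintype ι] (f : E3 → ι → ℝ) : ℝ := LinfGrad 0 f

def ZeroMean {ι : Type*} [Fintype ι] (f : E3 → ι → ℝ) : Prop :=
  ∀ i, (∫ x in T3, f x i) = 0

def vdiv (u : E3 → E3) : E3 → ℝ := fun x => ∑ j, pd j (fun y => u y j) x

def vcurl (u : E3 → E3) : E3 → E3 := fun x =>
  ![pd 1 (fun y => u y 2) x - pd 2 (fun y => u y 1) x,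
    pd 2 (fun y => u y 0) x - pd 0 (fun y => u y 2) x,
    pd 0 (fun y => u y 1) x - pd 1 (fun y => u y 0) x]

def lap (f : E3 → ℝ) : E3 → ℝ := fun x => ∑ j, pd j (pd j f) x

def IsNS (ν : ℝ) (I : Set ℝ) (u : E3 → ℝ → E3) (P : E3 → ℝ → ℝ) : Prop :=
  (∀ t ∈ I, ∀ (x : E3) (i : Fin 3),
      derivWithin (fun τ => u x τ i) I t
        + (∑ j, u x t j * pd j (fun y => u y t i) x)
        - ν * lap (fun y => u y t i) x
        = - pd i (fun y => P y t) x) ∧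
  (∀ t ∈ I, ∀ x : E3, vdiv (fun y => u y t) x = 0)

def SmoothOnTime (u : E3 → ℝ → E3) (I : Set ℝ) : Prop :=
  ContDiffOn ℝ (⊤ : ℕ∞) (fun p : E3 × ℝ => u p.1 p.2) (Set.univ ×ˢ I)

def wNormInf (m : ℕ) (w : E3 → ℝ → E3) (t : ℝ) : ℝ := LinfGrad m (fun x => w x t)

def Q (w : E3 → ℝ → E3) : ℕ → ℝ → ℝ
  | 0, _ => 1
  | (j + 1), t => 1 + ∑ m ∈ (Finset.range (j + 1)).attach,
      Q w m.1 t * ∫ τ in (0:ℝ)..t, (wNormInf (j + 1 - m.1) w τ) ^ 2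
  decreasing_by exact Finset.mem_range.mp m.2

def Qinf (w : E3 → ℝ → E3) (r : ℕ) : ℝ := ⨆ t : Set.Ici (0:ℝ), Q w r t

lemma contDiff_pd {f : E3 → ℝ} (hf : ContDiff ℝ (⊤ : ℕ∞) f) (j : Fin 3) : ContDiff ℝ (⊤ : ℕ∞) (pd j f) := by
  have h1 : ContDiff ℝ (⊤ : ℕ∞) (fderiv ℝ f) := hf.fderiv_right (by simp)
  exact (ContinuousLinearMap.apply ℝ ℝ (Pi.single j 1 : E3)).contDiff.comp h1

lemma pd_add {f g : E3 → ℝ} {x : E3} (hf : DifferentiableAt ℝ f x) (hg : DifferentiableAt ℝ g x)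
    (j : Fin 3) : pd j (fun y => f y + g y) x = pd j f x + pd j g x := by
  simp [pd, fderiv_fun_add hf hg]

lemma pd_sub {f g : E3 → ℝ} {x : E3} (hf : DifferentiableAt ℝ f x) (hg : DifferentiableAt ℝ g x)
    (j : Fin 3) : pd j (fun y => f y - g y) x = pd j f x - pd j g x := by
  simp [pd, fderiv_fun_sub hf hg]

lemma pd_const_mul {f : E3 → ℝ} {x : E3} (hf : DifferentiableAt ℝ f x) (c : ℝ)
    (j : Fin 3) : pd j (fun y => c * f y) x = c * pd j f x := by
  simp [pd, fderiv_const_mul hf c]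

lemma pd_neg {f : E3 → ℝ} {x : E3} (j : Fin 3) :
    pd j (fun y => -f y) x = - pd j f x := by
  simp [pd, fderiv_neg]

lemma pd_mul {f g : E3 → ℝ} {x : E3} (hf : DifferentiableAt ℝ f x) (hg : DifferentiableAt ℝ g x)
    (j : Fin 3) : pd j (fun y => f y * g y) x = f x * pd j g x + g x * pd j f x := by
  simp [pd, fderiv_fun_mul hf hg]

lemma pd_comm {f : E3 → ℝ} (hf : ContDiff ℝ (⊤ : ℕ∞) f) (a b : Fin 3) (x : E3) :
    pd a (pd b f) x = pd b (pd a f) x := by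
  have hsymm : IsSymmSndFDerivAt ℝ f x := hf.contDiffAt.isSymmSndFDerivAt (by rw [minSmoothness_of_isRCLikeNormedField]; exact WithTop.coe_le_coe.mpr (le_top : (2 : ℕ∞) ≤ ⊤))
  have hdf : DifferentiableAt ℝ (fderiv ℝ f) x :=
    ((hf.fderiv_right (m := (⊤ : ℕ∞)) (by simp)).differentiable (by simp)) x
  have key : ∀ (c d : Fin 3), pd c (pd d f) x
      = fderiv ℝ (fderiv ℝ f) x (Pi.single c 1) (Pi.single d 1) := by
    intro c d
    have h : HasFDerivAt (fun y => fderiv ℝ f y (Pi.single d 1 : E3))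
        ((ContinuousLinearMap.apply ℝ ℝ (Pi.single d 1 : E3)).comp (fderiv ℝ (fderiv ℝ f) x)) x :=
      (ContinuousLinearMap.apply ℝ ℝ (Pi.single d 1 : E3)).hasFDerivAt.comp x hdf.hasFDerivAt
    show fderiv ℝ (fun y => fderiv ℝ f y (Pi.single d 1 : E3)) x (Pi.single c 1) = _
    rw [h.fderiv]; rfl
  rw [key a b, key b a]
  exact hsymm _ _

section Generic
variable {N : ℝ} {fa fb fc : E3 → ℝ} {a b c : Fin 3}

lemma key_step {g u v : E3 → ℝ} (hg : ContDiff ℝ (⊤ : ℕ∞) g) (hu : ContDiff ℝ (⊤ : ℕ∞) u)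
    (hv : ContDiff ℝ (⊤ : ℕ∞) v) (he : ∀ y, u y - v y = N * g y) (j : Fin 3) (x : E3) :
    N * pd j g x = pd j u x - pd j v x := by
  have h1 : pd j (fun y => N * g y) x = pd j (fun y => u y - v y) x := by
    congr 1; funext y; rw [he y]
  rw [pd_const_mul (hg.differentiable (by simp) x) N j,
    pd_sub (hu.differentiable (by simp) x) (hv.differentiable (by simp) x) j] at h1
  exact h1

lemma beltrami_div (ha : ContDiff ℝ (⊤ : ℕ∞) fa) (hb : ContDiff ℝ (⊤ : ℕ∞) fb) (hc : ContDiff ℝ (⊤ : ℕ∞) fc)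
    (e1 : ∀ x, pd b fc x - pd c fb x = N * fa x)
    (e2 : ∀ x, pd c fa x - pd a fc x = N * fb x)
    (e3 : ∀ x, pd a fb x - pd b fa x = N * fc x) (x : E3) :
    N * (pd a fa x + pd b fb x + pd c fc x) = 0 := by
  have h1 := key_step ha (contDiff_pd hc b) (contDiff_pd hb c) e1 a x
  have h2 := key_step hb (contDiff_pd ha c) (contDiff_pd hc a) e2 b x
  have h3 := key_step hc (contDiff_pd hb a) (contDiff_pd ha b) e3 c x
  have c1 := pd_comm hc a b x
  have c2 := pd_comm hb c a x
  have c3 := pd_comm ha b c x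
  nlinarith [h1, h2, h3, c1, c2, c3]

lemma beltrami_lap (ha : ContDiff ℝ (⊤ : ℕ∞) fa) (hb : ContDiff ℝ (⊤ : ℕ∞) fb) (hc : ContDiff ℝ (⊤ : ℕ∞) fc)
    (e1 : ∀ x, pd b fc x - pd c fb x = N * fa x)
    (e2 : ∀ x, pd c fa x - pd a fc x = N * fb x)
    (e3 : ∀ x, pd a fb x - pd b fa x = N * fc x)
    (hdiv : ∀ x, pd a fa x + pd b fb x + pd c fc x = 0) (x : E3) :
    pd a (pd a fa) x + pd b (pd b fa) x + pd c (pd c fa) x = -(N ^ 2) * fa x := by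
  -- N² fa = N*(pd b fc - pd c fb)
  have h1 := key_step ha (contDiff_pd hc b) (contDiff_pd hb c) e1 b x
  -- N * pd b fc x = pd b (pd a fb) x - pd b (pd b fa) x
  have h2 := key_step hc (contDiff_pd hb a) (contDiff_pd ha b) e3 b x
  -- N * pd c fb x = pd c (pd c fa) x - pd c (pd a fc) x
  have h3 := key_step hb (contDiff_pd ha c) (contDiff_pd hc a) e2 c x
  have c2 := pd_comm hb b a x
  have c3 := pd_comm hc c a x
  -- pd a (pd b fb + pd c fc) = - pd a (pd a fa)
  have h4 : pd a (fun y => pd b fb y + pd c fc y) x = pd a (pd b fb) x + pd a (pd c fc) x :=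
    pd_add ((contDiff_pd hb b).differentiable (by simp) x)
      ((contDiff_pd hc c).differentiable (by simp) x) a
  have h5 : pd a (fun y => pd b fb y + pd c fc y) x = - pd a (pd a fa) x := by
    have he : (fun y => pd b fb y + pd c fc y) = fun y => -(pd a fa y) := by
      funext y; have := hdiv y; linarith
    rw [he, pd_neg]
  linear_combination (-N) * e1 x + h2 - h3 + c2 + c3 - h4 + h5
end Generic

lemma lap_const_mul {f : E3 → ℝ} (hf : ContDiff ℝ (⊤ : ℕ∞) f) (c : ℝ) (x : E3) :
    lap (fun y => c * f y) x = c * lap f x := by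
  have h1 : ∀ j : Fin 3, pd j (fun y => c * f y) = fun y => c * pd j f y := fun j =>
    funext fun y => pd_const_mul (hf.differentiable (by simp) y) c j
  simp only [lap, h1]
  rw [Finset.mul_sum]
  exact Finset.sum_congr rfl fun j _ => pd_const_mul ((contDiff_pd hf j).differentiable (by simp) x) c j

/-- a Beltrami field `curl W = N W` yields an explicit global smooth
solution of the Navier–Stokes equations with pressure `-½ e^{-2νN²t}|W|²`. -/
theorem beltrami_navier_stokes_solution
    (ν N : ℝ) (hν : 0 < ν) (hN : N ≠ 0) (W : E3 → E3)
    (hW : ContDiff ℝ (⊤ : ℕ∞) W) (hper : SpacePeriodic W)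
    (hBel : ∀ x, vcurl W x = N • W x) :
    (∀ x, vdiv W x = 0) ∧
    (∀ x i, lap (fun y => W y i) x = -N ^ 2 * W x i) ∧
    SmoothOnTime (fun x t => Real.exp (-ν * N ^ 2 * t) • W x) (Set.Ici 0) ∧
    IsNS ν (Set.Ici 0)
      (fun x t => Real.exp (-ν * N ^ 2 * t) • W x)
      (fun x t => -(1 / 2) * Real.exp (-2 * ν * N ^ 2 * t) * ∑ i, (W x i) ^ 2) ∧
    (∀ x, Real.exp (-ν * N ^ 2 * 0) • W x = W x) := by
  
  have hWc : ∀ i, ContDiff ℝ (⊤ : ℕ∞) (fun y => W y i) := fun i => (contDiff_pi.mp hW) i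
  have hWd : ∀ i, Differentiable ℝ (fun y => W y i) := fun i => (hWc i).differentiable (by simp)
  have h0 : ∀ x, pd 1 (fun y => W y 2) x - pd 2 (fun y => W y 1) x = N * W x 0 := fun x => by
    have := congrFun (hBel x) 0; simpa [vcurl] using this
  have h1 : ∀ x, pd 2 (fun y => W y 0) x - pd 0 (fun y => W y 2) x = N * W x 1 := fun x => by
    have := congrFun (hBel x) 1; simpa [vcurl] using this
  have h2 : ∀ x, pd 0 (fun y => W y 1) x - pd 1 (fun y => W y 0) x = N * W x 2 := fun x => by
    have := congrFun (hBel x) 2; simpa [vcurl] using this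
  have hdiv' : ∀ x, pd 0 (fun y => W y 0) x + pd 1 (fun y => W y 1) x
      + pd 2 (fun y => W y 2) x = 0 := by
    intro x
    have h := beltrami_div (hWc 0) (hWc 1) (hWc 2) h0 h1 h2 x
    exact (mul_eq_zero.mp h).resolve_left hN
  have hdiv : ∀ x, vdiv W x = 0 := fun x => by
    simpa [vdiv, Fin.sum_univ_three] using hdiv' x
  have L0 : ∀ x, pd 0 (pd 0 (fun y => W y 0)) x + pd 1 (pd 1 (fun y => W y 0)) x
      + pd 2 (pd 2 (fun y => W y 0)) x = -(N ^ 2) * W x 0 :=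
    fun x => beltrami_lap (hWc 0) (hWc 1) (hWc 2) h0 h1 h2 hdiv' x
  have L1 : ∀ x, pd 1 (pd 1 (fun y => W y 1)) x + pd 2 (pd 2 (fun y => W y 1)) x
      + pd 0 (pd 0 (fun y => W y 1)) x = -(N ^ 2) * W x 1 :=
    fun x => beltrami_lap (hWc 1) (hWc 2) (hWc 0) h1 h2 h0 (fun y => by linarith [hdiv' y]) x
  have L2 : ∀ x, pd 2 (pd 2 (fun y => W y 2)) x + pd 0 (pd 0 (fun y => W y 2)) x
      + pd 1 (pd 1 (fun y => W y 2)) x = -(N ^ 2) * W x 2 :=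
    fun x => beltrami_lap (hWc 2) (hWc 0) (hWc 1) h2 h0 h1 (fun y => by linarith [hdiv' y]) x
  have hlap : ∀ x i, lap (fun y => W y i) x = -N ^ 2 * W x i := by
    intro x i
    match i with
    | 0 => simp only [lap, Fin.sum_univ_three]; linarith [L0 x]
    | 1 => simp only [lap, Fin.sum_univ_three]; linarith [L1 x]
    | 2 => simp only [lap, Fin.sum_univ_three]; linarith [L2 x]
  have nl : ∀ x (i : Fin 3),
      W x 0 * pd 0 (fun y => W y i) x + W x 1 * pd 1 (fun y => W y i) x
        + W x 2 * pd 2 (fun y => W y i) x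
      = W x 0 * pd i (fun y => W y 0) x + W x 1 * pd i (fun y => W y 1) x
        + W x 2 * pd i (fun y => W y 2) x := by
    intro x i
    match i with
    | 0 => linear_combination (W x 2) * h1 x - (W x 1) * h2 x
    | 1 => linear_combination (W x 0) * h2 x - (W x 2) * h0 x
    | 2 => linear_combination (W x 1) * h0 x - (W x 0) * h1 x
  have hsm : ContDiff ℝ (⊤ : ℕ∞) (fun p : E3 × ℝ => Real.exp (-ν * N ^ 2 * p.2) • W p.1) := by
    have he : ContDiff ℝ (⊤ : ℕ∞) (fun p : E3 × ℝ => Real.exp (-ν * N ^ 2 * p.2)) :=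
      Real.contDiff_exp.comp (contDiff_const.mul contDiff_snd)
    exact he.smul (hW.comp contDiff_fst)
  refine ⟨hdiv, hlap, hsm.contDiffOn, ⟨?_, ?_⟩, fun x => by simp⟩
  · intro t ht x i
    simp only [Pi.smul_apply, smul_eq_mul]
    set EE := Real.exp (-ν * N ^ 2 * t) with hEE
    have hd1 : HasDerivAt (fun τ : ℝ => -ν * N ^ 2 * τ) (-ν * N ^ 2 * 1) t :=
      (hasDerivAt_id t).const_mul (-ν * N ^ 2)
    have hd2 := (hd1.exp).mul_const (W x i)
    have hdw : derivWithin (fun τ => Real.exp (-ν * N ^ 2 * τ) * W x i) (Set.Ici 0) t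
        = EE * (-ν * N ^ 2 * 1) * W x i :=
      (hd2.hasDerivWithinAt).derivWithin (uniqueDiffOn_Ici 0 t ht)
    have hp : ∀ (j k : Fin 3), pd j (fun y => EE * W y k) x
        = EE * pd j (fun y => W y k) x := fun j k => pd_const_mul (hWd k x) EE j
    have hl : lap (fun y => EE * W y i) x = EE * lap (fun y => W y i) x :=
      lap_const_mul (hWc i) EE x
    have dsq : ∀ j : Fin 3, DifferentiableAt ℝ (fun y => W y j * W y j) x :=
      fun j => ((hWd j).mul (hWd j)) x
    have dsum : DifferentiableAt ℝ (fun y => W y 1 * W y 1 + W y 2 * W y 2) x :=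
      (dsq 1).add (dsq 2)
    have e1 : (fun y => -(1 / 2) * Real.exp (-2 * ν * N ^ 2 * t) * ∑ j, (W y j) ^ 2)
        = fun y => (-(1 / 2) * Real.exp (-2 * ν * N ^ 2 * t))
            * (W y 0 * W y 0 + (W y 1 * W y 1 + W y 2 * W y 2)) := by
      funext y; rw [Fin.sum_univ_three]; ring
    have hP : pd i (fun y => -(1 / 2) * Real.exp (-2 * ν * N ^ 2 * t) * ∑ j, (W y j) ^ 2) x
        = (-(1 / 2) * Real.exp (-2 * ν * N ^ 2 * t))
            * ((W x 0 * pd i (fun y => W y 0) x + W x 0 * pd i (fun y => W y 0) x)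
              + ((W x 1 * pd i (fun y => W y 1) x + W x 1 * pd i (fun y => W y 1) x)
                + (W x 2 * pd i (fun y => W y 2) x + W x 2 * pd i (fun y => W y 2) x))) := by
      rw [e1, pd_const_mul ((dsq 0).fun_add dsum) _ i, pd_add (dsq 0) dsum i,
        pd_add (dsq 1) (dsq 2) i, pd_mul (hWd 0 x) (hWd 0 x) i,
        pd_mul (hWd 1 x) (hWd 1 x) i, pd_mul (hWd 2 x) (hWd 2 x) i]
    have hE2 : Real.exp (-2 * ν * N ^ 2 * t) = EE * EE := by
      rw [hEE, ← Real.exp_add]; ring_nf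
    rw [Fin.sum_univ_three, hdw, hp 0 i, hp 1 i, hp 2 i, hl, hlap x i, hP, hE2]
    linear_combination (EE * EE) * nl x i
  · intro t ht x
    have hp : ∀ (j : Fin 3), pd j (fun y => Real.exp (-ν * N ^ 2 * t) * W y j) x
        = Real.exp (-ν * N ^ 2 * t) * pd j (fun y => W y j) x :=
      fun j => pd_const_mul (hWd j x) _ j
    simp only [vdiv, Pi.smul_apply, smul_eq_mul, Fin.sum_univ_three, hp]
    linear_combination Real.exp (-ν * N ^ 2 * t) * hdiv' x
end
end

section
/- Let p and q be positive integers, let ξ ∈ ℝ, and let h : ℝ² → ℝ be the function h(y₁,y₂) := cos(p y₁ − q y₂). Then ∫₀^{2πq} [ ∂₂h·∂₂₂h + ∂₁h·∂₁₂h − (p/q)·∂₂h·∂₁₂h − (p/q)·∂₁h·∂₁₁h ] evaluated at the point (s + ξ, (p/q)s) ds = −π (p² + q²)² sin(2pξ). -/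
open MeasureTheory Real Set

noncomputable section

/-- Smoothness of a time-dependent scalar function (e.g. the pressure) on `𝕋³ × I`. -/
def SmoothOnTimeS (P : E3 → ℝ → ℝ) (I : Set ℝ) : Prop :=
  ContDiffOn ℝ (⊤ : ℕ∞) (fun p : E3 × ℝ => P p.1 p.2) (Set.univ ×ˢ I)

/-- Partial derivative in the first variable of a function of two real variables. -/
def d1 (h : ℝ → ℝ → ℝ) : ℝ → ℝ → ℝ := fun a b => deriv (fun y => h y b) a

/-- Partial derivative in the second variable of a function of two real variables. -/
def d2 (h : ℝ → ℝ → ℝ) : ℝ → ℝ → ℝ := fun a b => deriv (fun z => h a z) b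

private lemma hasDerivAt_cos_lin (c k : ℝ) (x : ℝ) :
    HasDerivAt (fun y => Real.cos (k * y + c)) (-Real.sin (k * x + c) * k) x := by
  have h1 : HasDerivAt (fun y : ℝ => k * y + c) k x := by
    simpa using ((hasDerivAt_id x).const_mul k).add_const c
  exact (Real.hasDerivAt_cos _).comp x h1

private lemma hasDerivAt_sin_lin (c k : ℝ) (x : ℝ) :
    HasDerivAt (fun y => Real.sin (k * y + c)) (Real.cos (k * x + c) * k) x := by
  have h1 : HasDerivAt (fun y : ℝ => k * y + c) k x := by
    simpa using ((hasDerivAt_id x).const_mul k).add_const c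
  exact (Real.hasDerivAt_sin _).comp x h1

section melnikov_aux
variable (p q : ℕ)

private lemma d1_cos : d1 (fun y₁ y₂ => Real.cos (p * y₁ - q * y₂))
    = fun a b => Real.sin ((p:ℝ) * a - q * b) * (-(p:ℝ)) := by
  funext a b
  have := (hasDerivAt_cos_lin (-(q:ℝ) * b) p a).deriv
  simp only [d1]
  rw [show (fun y => Real.cos ((p:ℝ) * y - q * b)) = fun y => Real.cos ((p:ℝ) * y + (-(q:ℝ) * b)) by
    funext y; ring_nf]
  rw [this]; ring_nf

private lemma d2_cos : d2 (fun y₁ y₂ => Real.cos (p * y₁ - q * y₂))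
    = fun a b => Real.sin ((p:ℝ) * a - q * b) * q := by
  funext a b
  have := (hasDerivAt_cos_lin ((p:ℝ) * a) (-(q:ℝ)) b).deriv
  simp only [d2]
  rw [show (fun z => Real.cos ((p:ℝ) * a - q * z)) = fun z => Real.cos ((-(q:ℝ)) * z + (p:ℝ) * a) by
    funext z; ring_nf]
  rw [this]; ring_nf

private lemma d1_sin (K : ℝ) : d1 (fun a b => Real.sin ((p:ℝ) * a - q * b) * K)
    = fun a b => Real.cos ((p:ℝ) * a - q * b) * p * K := by
  funext a b
  have := ((hasDerivAt_sin_lin (-(q:ℝ) * b) p a).mul_const K).deriv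
  simp only [d1]
  rw [show (fun y => Real.sin ((p:ℝ) * y - q * b) * K)
      = fun y => Real.sin ((p:ℝ) * y + (-(q:ℝ) * b)) * K by funext y; ring_nf]
  rw [this]; ring_nf

private lemma d2_sin (K : ℝ) : d2 (fun a b => Real.sin ((p:ℝ) * a - q * b) * K)
    = fun a b => Real.cos ((p:ℝ) * a - q * b) * (-(q:ℝ)) * K := by
  funext a b
  have := ((hasDerivAt_sin_lin ((p:ℝ) * a) (-(q:ℝ)) b).mul_const K).deriv
  simp only [d2]
  rw [show (fun z => Real.sin ((p:ℝ) * a - q * z) * K)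
      = fun z => Real.sin ((-(q:ℝ)) * z + (p:ℝ) * a) * K by funext z; ring_nf]
  rw [this]; ring_nf

end melnikov_aux

/-- explicit computation of the leading-order Melnikov integral for
`h(y₁,y₂) = cos(p y₁ − q y₂)` on the resonant torus `cot X₃ = p/q`. -/
theorem melnikov_integral_cos (p q : ℕ) (hp : 0 < p) (hq : 0 < q) (ξ : ℝ) :
    (∫ s in (0:ℝ)..(2 * Real.pi * q),
      (fun h : ℝ → ℝ → ℝ =>
        d2 h (s + ξ) (((p : ℝ) / (q : ℝ)) * s) * d2 (d2 h) (s + ξ) (((p : ℝ) / (q : ℝ)) * s)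
        + d1 h (s + ξ) (((p : ℝ) / (q : ℝ)) * s) * d1 (d2 h) (s + ξ) (((p : ℝ) / (q : ℝ)) * s)
        - ((p : ℝ) / (q : ℝ)) * d2 h (s + ξ) (((p : ℝ) / (q : ℝ)) * s) * d1 (d2 h) (s + ξ) (((p : ℝ) / (q : ℝ)) * s)
        - ((p : ℝ) / (q : ℝ)) * d1 h (s + ξ) (((p : ℝ) / (q : ℝ)) * s) * d1 (d1 h) (s + ξ) (((p : ℝ) / (q : ℝ)) * s))
        (fun y₁ y₂ => Real.cos (p * y₁ - q * y₂)))
    = -Real.pi * ((p : ℝ) ^ 2 + (q : ℝ) ^ 2) ^ 2 * Real.sin (2 * p * ξ) := by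
  have hq' : (q:ℝ) ≠ 0 := Nat.cast_ne_zero.mpr hq.ne'
  set C : ℝ := Real.sin ((p:ℝ) * ξ) * Real.cos ((p:ℝ) * ξ) *
      (-(q:ℝ)^3 - 2*(p:ℝ)^2*(q:ℝ) - (p:ℝ)^4/(q:ℝ)) with hC
  have key : ∀ s : ℝ,
      (fun h : ℝ → ℝ → ℝ =>
        d2 h (s + ξ) (((p : ℝ) / (q : ℝ)) * s) * d2 (d2 h) (s + ξ) (((p : ℝ) / (q : ℝ)) * s)
        + d1 h (s + ξ) (((p : ℝ) / (q : ℝ)) * s) * d1 (d2 h) (s + ξ) (((p : ℝ) / (q : ℝ)) * s)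
        - ((p : ℝ) / (q : ℝ)) * d2 h (s + ξ) (((p : ℝ) / (q : ℝ)) * s) * d1 (d2 h) (s + ξ) (((p : ℝ) / (q : ℝ)) * s)
        - ((p : ℝ) / (q : ℝ)) * d1 h (s + ξ) (((p : ℝ) / (q : ℝ)) * s) * d1 (d1 h) (s + ξ) (((p : ℝ) / (q : ℝ)) * s))
        (fun y₁ y₂ => Real.cos (p * y₁ - q * y₂)) = C := by
    intro s
    simp only [d1_cos, d2_cos, d1_sin, d2_sin]
    have hθ : (p:ℝ) * (s + ξ) - (q:ℝ) * (((p:ℝ) / (q:ℝ)) * s) = (p:ℝ) * ξ := by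
      field_simp; ring
    rw [hθ, hC]
    field_simp
    ring
  rw [intervalIntegral.integral_congr (g := fun _ : ℝ => C) (fun s _ => key s),
    intervalIntegral.integral_const]
  have hsin : Real.sin (2 * (p:ℝ) * ξ) = 2 * Real.sin ((p:ℝ)*ξ) * Real.cos ((p:ℝ)*ξ) := by
    rw [mul_assoc, Real.sin_two_mul]
  rw [hsin, hC]
  simp only [smul_eq_mul, sub_zero]
  field_simp
  ring
end
end

section
/- Let ν > 0, M > 0, let r ≥ 7 and n ≥ 1 be integers, let 0 < T₁ < T₂ < ⋯ < T_n be real numbers, and let C₀ ≥ 1. Then there exist positive integers N₀ > N₁ > ⋯ > N_n and positive reals δ₁ > δ₂ > ⋯ > δ_n such that, setting δ₀ := M, the following hold: (i) N_n ≥ C₀, C₀ N_{k+1} ≤ N_k for every 2 ≤ k ≤ n−1, C₀ N₂² ≤ N₁, and C₀ N₁^{(r−1)/2} ≤ N₀; (ii) C₀ δ₁ N₁^{r+1/2} ≤ N₀^{−r}; (iii) C₀ δ₁ N₁^{r−1/2} ≤ 1; (iv) C₀ δ_{k−1} e^{−ν(N_{k−1}² − N_k²)T_k} ≤ δ_k N_{k−1}^{−r}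 for every 1 ≤ k ≤ n; (v) C₀ δ_{k+1} e^{ν(N_k² − N_{k+1}²)T_k} ≤ δ_k N_{k+1}^{−r} for every 1 ≤ k ≤ n−1; (vi) C₀ e^{νN_n²T_n} (δ₁ N₀^{−2} + δ₁² N₀^{r+1} N₁^{r+2}) ≤ δ_n. -/
open MeasureTheory Real Set

noncomputable section

/-- Auxiliary: polynomial growth is eventually dominated by `a * exp (c x^2)`. -/
lemma key_pow_le_mul_exp (a c : ℝ) (ha : 0 < a) (hc : 0 < c) (p : ℕ) :
    ∃ K : ℝ, ∀ x : ℝ, 1 ≤ x → K ≤ x → x ^ p ≤ a * Real.exp (c * x ^ 2) := by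
  refine ⟨((p+1).factorial : ℝ) / (a * c^(p+1)), fun x hx1 hxK => ?_⟩
  have hx0 : (0:ℝ) < x := lt_of_lt_of_le one_pos hx1
  have hfac : (0:ℝ) < ((p+1).factorial : ℝ) := by exact_mod_cast Nat.factorial_pos _
  have h1 : (c*x^2)^(p+1) / ((p+1).factorial : ℝ) ≤ Real.exp (c*x^2) :=
    Real.pow_div_factorial_le_exp _ (by positivity) (p+1)
  have h2 : x ≤ x^(p+2) := le_self_pow₀ hx1 (by omega)
  have hK1 : 1 ≤ a * c^(p+1) / ((p+1).factorial : ℝ) * x := by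
    rw [div_mul_eq_mul_div, le_div_iff₀ hfac, one_mul]
    have := (div_le_iff₀ (by positivity : (0:ℝ) < a * c^(p+1))).mp hxK
    nlinarith
  have hd : (0:ℝ) < a * c^(p+1) / ((p+1).factorial : ℝ) := by positivity
  calc x ^ p = 1 * x ^ p := (one_mul _).symm
    _ ≤ (a * c^(p+1) / ((p+1).factorial : ℝ) * x) * x ^ p :=
        mul_le_mul_of_nonneg_right hK1 (by positivity)
    _ ≤ (a * c^(p+1) / ((p+1).factorial : ℝ)) * x^(p+2) * x ^ p := by
        exact mul_le_mul_of_nonneg_right (mul_le_mul_of_nonneg_left h2 hd.le) (by positivity)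
    _ = a * ((c*x^2)^(p+1) / ((p+1).factorial : ℝ)) := by
        field_simp
        ring
    _ ≤ a * Real.exp (c*x^2) := mul_le_mul_of_nonneg_left h1 ha.le

set_option maxHeartbeats 4000000 in
/-- choice of the frequencies `N₀ > N₁ > ⋯ > N_n` and amplitudes
`δ₁ > ⋯ > δ_n` making all the smallness conditions of the vortex-reconnection
construction compatible. -/

theorem choice_of_constants
    (ν M : ℝ) (hν : 0 < ν) (hM : 0 < M)
    (r n : ℕ) (hr : 7 ≤ r) (hn : 1 ≤ n)
    (T : ℕ → ℝ) (hT1 : 0 < T 1) (hTmono : ∀ k, 1 ≤ k → k < n → T k < T (k + 1))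
    (C₀ : ℝ) (hC₀ : 1 ≤ C₀) :
    ∃ (N : ℕ → ℕ) (δ : ℕ → ℝ),
      δ 0 = M ∧
      (∀ k ≤ n, 0 < N k) ∧
      (∀ k < n, N (k + 1) < N k) ∧
      (∀ k, 1 ≤ k → k ≤ n → 0 < δ k) ∧
      (∀ k, 1 ≤ k → k < n → δ (k + 1) < δ k) ∧
      -- (i)
      (C₀ ≤ (N n : ℝ)) ∧
      (∀ k, 2 ≤ k → k ≤ n - 1 → C₀ * (N (k + 1) : ℝ) ≤ (N k : ℝ)) ∧
      (C₀ * (N 2 : ℝ) ^ 2 ≤ (N 1 : ℝ)) ∧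
      (C₀ * (N 1 : ℝ) ^ (((r : ℝ) - 1) / 2) ≤ (N 0 : ℝ)) ∧
      -- (ii)
      (C₀ * δ 1 * (N 1 : ℝ) ^ ((r : ℝ) + 1 / 2) ≤ (N 0 : ℝ) ^ (-(r : ℝ))) ∧
      -- (iii)
      (C₀ * δ 1 * (N 1 : ℝ) ^ ((r : ℝ) - 1 / 2) ≤ 1) ∧
      -- (iv)
      (∀ k, 1 ≤ k → k ≤ n →
        C₀ * δ (k - 1) * Real.exp (-ν * ((N (k - 1) : ℝ) ^ 2 - (N k : ℝ) ^ 2) * T k)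
          ≤ δ k * (N (k - 1) : ℝ) ^ (-(r : ℤ))) ∧
      -- (v)
      (∀ k, 1 ≤ k → k ≤ n - 1 →
        C₀ * δ (k + 1) * Real.exp (ν * ((N k : ℝ) ^ 2 - (N (k + 1) : ℝ) ^ 2) * T k)
          ≤ δ k * (N (k + 1) : ℝ) ^ (-(r : ℤ))) ∧
      -- (vi)
      (C₀ * Real.exp (ν * (N n : ℝ) ^ 2 * T n) *
          (δ 1 * (N 0 : ℝ) ^ (-(2 : ℤ)) + (δ 1) ^ 2 * (N 0 : ℝ) ^ (r + 1) * (N 1 : ℝ) ^ (r + 2))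
        ≤ δ n) := by
  classical
  have hC0pos : (0:ℝ) < C₀ := lt_of_lt_of_le one_pos hC₀
  have Tpos : ∀ k, 1 ≤ k → k ≤ n → 0 < T k := by
    intro k
    induction k with
    | zero => intro h; omega
    | succ j ih =>
      intro _ hjn
      rcases Nat.eq_zero_or_pos j with h0 | h1
      · subst h0; exact hT1
      · exact lt_trans (ih h1 (by omega)) (hTmono j h1 (by omega))
  -- One construction step: given an inner frequency `m`, find a much larger outer one.
  have step : ∀ (m : ℕ) (τ T' : ℝ), 1 ≤ m → 0 < τ → 0 < T' →
      ∃ Nv : ℕ, m < Nv ∧ C₀ * (m:ℝ)^2 ≤ (Nv:ℝ) ∧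
        C₀^2 * (m:ℝ)^r * (Nv:ℝ)^r ≤ Real.exp (ν * ((Nv:ℝ)^2 - (m:ℝ)^2) * τ) ∧
        C₀ * (Nv:ℝ)^r * Real.exp (-ν * ((Nv:ℝ)^2 - (m:ℝ)^2) * T') < 1 := by
    intro m τ T' hm hτ hT'
    have hm0 : (0:ℝ) < (m:ℝ) := by exact_mod_cast hm
    obtain ⟨K₁, hK₁⟩ := key_pow_le_mul_exp
      (Real.exp (-(ν*τ) * (m:ℝ)^2) / (C₀^2 * (m:ℝ)^r)) (ν*τ)
      (by positivity) (by positivity) r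
    obtain ⟨K₂, hK₂⟩ := key_pow_le_mul_exp
      (Real.exp (-(ν*T') * (m:ℝ)^2) / C₀ / 2) (ν*T')
      (by positivity) (by positivity) r
    obtain ⟨Nv, hNv⟩ := exists_nat_gt (max (max ((m:ℝ)) (C₀*(m:ℝ)^2)) (max (max K₁ K₂) 1))
    simp only [max_lt_iff] at hNv
    obtain ⟨⟨hm1, hm2⟩, ⟨hk1, hk2⟩, h1'⟩ := hNv
    have hNv1 : (1:ℝ) ≤ (Nv:ℝ) := h1'.le
    refine ⟨Nv, by exact_mod_cast hm1, hm2.le, ?_, ?_⟩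
    · have h := hK₁ Nv hNv1 hk1.le
      calc C₀^2 * (m:ℝ)^r * (Nv:ℝ)^r
          ≤ C₀^2 * (m:ℝ)^r *
            (Real.exp (-(ν*τ) * (m:ℝ)^2) / (C₀^2 * (m:ℝ)^r) * Real.exp (ν*τ*(Nv:ℝ)^2)) :=
            mul_le_mul_of_nonneg_left h (by positivity)
        _ = Real.exp (-(ν*τ) * (m:ℝ)^2) * Real.exp (ν*τ*(Nv:ℝ)^2) := by
            field_simp
        _ = Real.exp (ν * ((Nv:ℝ)^2 - (m:ℝ)^2) * τ) := by
            rw [← Real.exp_add]; congr 1; ring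
    · have h := hK₂ Nv hNv1 hk2.le
      have hlt : (Nv:ℝ)^r <
          Real.exp (-(ν*T') * (m:ℝ)^2) / C₀ * Real.exp (ν*T'*(Nv:ℝ)^2) := by
        have h2 : Real.exp (-(ν*T') * (m:ℝ)^2) / C₀ / 2 * Real.exp (ν*T'*(Nv:ℝ)^2)
            < Real.exp (-(ν*T') * (m:ℝ)^2) / C₀ * Real.exp (ν*T'*(Nv:ℝ)^2) := by
          have he := Real.exp_pos (ν*T'*(Nv:ℝ)^2)
          have hp : (0:ℝ) < Real.exp (-(ν*T') * (m:ℝ)^2) / C₀ := by positivity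
          nlinarith
        exact lt_of_le_of_lt h h2
      have hC : C₀ * (Nv:ℝ)^r <
          Real.exp (-(ν*T') * (m:ℝ)^2) * Real.exp (ν*T'*(Nv:ℝ)^2) := by
        have := mul_lt_mul_of_pos_left hlt hC0pos
        calc C₀ * (Nv:ℝ)^r
            < C₀ * (Real.exp (-(ν*T') * (m:ℝ)^2) / C₀ * Real.exp (ν*T'*(Nv:ℝ)^2)) := this
          _ = Real.exp (-(ν*T') * (m:ℝ)^2) * Real.exp (ν*T'*(Nv:ℝ)^2) := by
              field_simp
      calc C₀ * (Nv:ℝ)^r * Real.exp (-ν * ((Nv:ℝ)^2 - (m:ℝ)^2) * T')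
          < (Real.exp (-(ν*T') * (m:ℝ)^2) * Real.exp (ν*T'*(Nv:ℝ)^2)) *
              Real.exp (-ν * ((Nv:ℝ)^2 - (m:ℝ)^2) * T') :=
            mul_lt_mul_of_pos_right hC (Real.exp_pos _)
        _ = 1 := by
            rw [← Real.exp_add, ← Real.exp_add,
              show (-(ν*T') * (m:ℝ)^2) + ν*T'*(Nv:ℝ)^2 + (-ν * ((Nv:ℝ)^2 - (m:ℝ)^2) * T') = 0
                by ring, Real.exp_zero]
  -- Build the chain `G 0 = N_n, …, G (n-1) = N₁` by induction.
  have chain : ∀ d, d ≤ n - 1 → ∃ G : ℕ → ℕ,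
      C₀ ≤ (G 0 : ℝ) ∧ (∀ j, 1 ≤ G j) ∧
      ∀ j, j < d → G j < G (j+1) ∧ C₀ * (G j:ℝ)^2 ≤ (G (j+1):ℝ) ∧
        C₀^2 * (G j:ℝ)^r * (G (j+1):ℝ)^r ≤
          Real.exp (ν * ((G (j+1):ℝ)^2 - (G j:ℝ)^2) * (T (n - j) - T (n - j - 1))) ∧
        C₀ * (G (j+1):ℝ)^r * Real.exp (-ν * ((G (j+1):ℝ)^2 - (G j:ℝ)^2) * T (n - j)) < 1 := by
    intro d
    induction d with
    | zero =>
      intro _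
      obtain ⟨b, hb⟩ := exists_nat_gt (max C₀ 1)
      rw [max_lt_iff] at hb
      exact ⟨fun _ => b, hb.1.le, fun _ => by exact_mod_cast hb.2.le,
        fun j hj => absurd hj (Nat.not_lt_zero j)⟩
    | succ d ih =>
      intro hd
      obtain ⟨G, hG0, hG1, hGp⟩ := ih (by omega)
      have hτ : 0 < T (n - d) - T (n - d - 1) := by
        have h := hTmono (n - d - 1) (by omega) (by omega)
        have e : n - d - 1 + 1 = n - d := by omega
        rw [e] at h; linarith
      have hT' : 0 < T (n - d) := Tpos _ (by omega) (by omega)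
      obtain ⟨Nv, hNv1, hNv2, hNv3, hNv4⟩ := step (G d) _ _ (hG1 d) hτ hT'
      refine ⟨Function.update G (d+1) Nv, ?_, ?_, ?_⟩
      · rwa [Function.update_of_ne (by omega)]
      · intro j
        rcases eq_or_ne j (d+1) with rfl | hne
        · rw [Function.update_self]; omega
        · rw [Function.update_of_ne hne]; exact hG1 j
      · intro j hj
        rcases Nat.lt_succ_iff_lt_or_eq.mp hj with hj' | rfl
        · have e1 : Function.update G (d+1) Nv j = G j :=
            Function.update_of_ne (by omega) _ _
          have e2 : Function.update G (d+1) Nv (j+1) = G (j+1) :=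
            Function.update_of_ne (by omega) _ _
          rw [e1, e2]; exact hGp j hj'
        · have e1 : Function.update G (j+1) Nv j = G j :=
            Function.update_of_ne (by omega) _ _
          have e2 : Function.update G (j+1) Nv (j+1) = Nv := Function.update_self _ _ _
          rw [e1, e2]
          exact ⟨hNv1, hNv2, hNv3, hNv4⟩
  obtain ⟨G, hGC, hG1, hGp⟩ := chain (n-1) le_rfl
  -- The tail frequencies `Np k = N_k` for `1 ≤ k ≤ n`.
  obtain ⟨Np, hNptop, hNple⟩ : ∃ Np : ℕ → ℕ,
      (∀ k, n < k → Np k = 1) ∧ (∀ k, k ≤ n → Np k = G (n - k)) :=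
    ⟨fun k => if n < k then 1 else G (n-k), fun k h => if_pos h, fun k h => if_neg (by omega)⟩
  have hNp1 : ∀ k, 1 ≤ Np k := by
    intro k
    rcases le_or_gt k n with h | h
    · rw [hNple k h]; exact hG1 _
    · rw [hNptop k h]
  have hNpn : (C₀ : ℝ) ≤ (Np n : ℝ) := by
    rw [hNple n le_rfl, Nat.sub_self]; exact hGC
  have pairNp : ∀ k, 1 ≤ k → k < n →
      Np (k+1) < Np k ∧ C₀ * (Np (k+1):ℝ)^2 ≤ (Np k:ℝ) ∧
      C₀^2 * (Np (k+1):ℝ)^r * (Np k:ℝ)^r ≤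
        Real.exp (ν * ((Np k:ℝ)^2 - (Np (k+1):ℝ)^2) * (T (k+1) - T k)) ∧
      C₀ * (Np k:ℝ)^r * Real.exp (-ν * ((Np k:ℝ)^2 - (Np (k+1):ℝ)^2) * T (k+1)) < 1 := by
    intro k hk1 hkn
    have h := hGp (n - k - 1) (by omega)
    have e1 : n - (n - k - 1) = k + 1 := by omega
    have e2 : n - (n - k - 1) - 1 = k := by omega
    have e3 : n - k - 1 + 1 = n - k := by omega
    rw [e3, e2, e1] at h
    have eA : Np k = G (n - k) := hNple k (by omega)
    have eB : Np (k+1) = G (n - k - 1) := by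
      rw [hNple (k+1) (by omega)]; congr 1
    rw [eA, eB]
    exact h
  have hNp1pos : (0:ℝ) < (Np 1 : ℝ) := by exact_mod_cast hNp1 1
  have hNpnpos : (0:ℝ) < (Np n : ℝ) := by exact_mod_cast hNp1 n
  -- The amplitude-ratio product and the final-time exponential.
  set A : ℝ := ∏ k ∈ Finset.Ico 1 n,
      (C₀ * (Np k:ℝ)^r * Real.exp (-ν * ((Np k:ℝ)^2 - (Np (k+1):ℝ)^2) * T (k+1))) with hAdef
  have hApos : 0 < A := by
    rw [hAdef]
    refine Finset.prod_pos (fun k _ => ?_)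
    have hk : (0:ℝ) < (Np k : ℝ) := by exact_mod_cast hNp1 k
    positivity
  set B : ℝ := Real.exp (ν * (Np n:ℝ)^2 * T n) with hBdef
  have hBpos : 0 < B := Real.exp_pos _
  have hc : (0:ℝ) < ν * T 1 := mul_pos hν hT1
  have hαpos : (0:ℝ) < (Np 1:ℝ)^((r:ℝ)+1/2) := Real.rpow_pos_of_pos hNp1pos _
  have hβpos : (0:ℝ) < (Np 1:ℝ)^((r:ℝ)-1/2) := Real.rpow_pos_of_pos hNp1pos _
  have hγpos : (0:ℝ) < (Np 1:ℝ)^(r+2) := pow_pos hNp1pos _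
  obtain ⟨Kii, hKii⟩ := key_pow_le_mul_exp
    (Real.exp (-(ν * T 1) * (Np 1:ℝ)^2) / (C₀^2 * M * (Np 1:ℝ)^((r:ℝ)+1/2))) (ν * T 1)
    (div_pos (Real.exp_pos _) (mul_pos (mul_pos (pow_pos hC0pos 2) hM) hαpos)) hc (2*r)
  obtain ⟨Kiii, hKiii⟩ := key_pow_le_mul_exp
    (Real.exp (-(ν * T 1) * (Np 1:ℝ)^2) / (C₀^2 * M * (Np 1:ℝ)^((r:ℝ)-1/2))) (ν * T 1)
    (div_pos (Real.exp_pos _) (mul_pos (mul_pos (pow_pos hC0pos 2) hM) hβpos)) hc r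
  obtain ⟨Kvi, hKvi⟩ := key_pow_le_mul_exp
    (A * Real.exp (-(ν*(Np 1:ℝ)^2*T 1)) / (2*C₀*B*C₀*M*(Np 1:ℝ)^(r+2))) (ν * T 1)
    (div_pos (mul_pos hApos (Real.exp_pos _))
      (by positivity)) hc (2*r+1)
  -- Choose the top frequency `N₀`.
  obtain ⟨N₀, hN₀⟩ := exists_nat_gt
    (max (max (max ((Np 1 : ℝ)) (C₀ * (Np 1:ℝ) ^ (((r:ℝ)-1)/2)))
              (max (2*C₀*B/A) 1))
         (max Kii (max Kiii Kvi)))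
  simp only [max_lt_iff] at hN₀
  obtain ⟨⟨⟨hx1, hx2⟩, hx3, hx4⟩, hxii, hxiii, hxvi⟩ := hN₀
  have hx1R : (1:ℝ) ≤ (N₀:ℝ) := hx4.le
  have hx0pos : (0:ℝ) < (N₀:ℝ) := lt_of_lt_of_le one_pos hx1R
  -- The final frequency sequence.
  obtain ⟨N, hN0, hNe⟩ : ∃ N : ℕ → ℕ, N 0 = N₀ ∧ ∀ k, 1 ≤ k → N k = Np k :=
    ⟨fun k => if k = 0 then N₀ else Np k, rfl, fun k hk => if_neg (by omega)⟩
  have hN0c : ((N 0 : ℕ) : ℝ) = (N₀ : ℝ) := by rw [hN0]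
  have hNpos : ∀ k, 0 < N k := by
    intro k
    rcases Nat.eq_zero_or_pos k with rfl | hk
    · rw [hN0]; exact_mod_cast hx0pos
    · rw [hNe k hk]; exact hNp1 k
  -- The amplitudes.
  obtain ⟨δ, hδ0, hδrec⟩ : ∃ δ : ℕ → ℝ, δ 0 = M ∧ ∀ k, δ (k+1) =
      C₀ * δ k * (N k:ℝ)^r * Real.exp (-ν * ((N k:ℝ)^2 - (N (k+1):ℝ)^2) * T (k+1)) :=
    ⟨fun k => Nat.rec M (fun k' p => C₀ * p * (N k':ℝ)^r *
        Real.exp (-ν * ((N k':ℝ)^2 - (N (k'+1):ℝ)^2) * T (k'+1))) k, rfl, fun k => rfl⟩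
  have hδpos : ∀ k, 0 < δ k := by
    intro k
    induction k with
    | zero => rw [hδ0]; exact hM
    | succ j ih =>
      rw [hδrec]
      have hNj : (0:ℝ) < (N j : ℝ) := by exact_mod_cast hNpos j
      positivity
  have hδprod : ∀ j, 1 ≤ j → δ j = δ 1 * ∏ k ∈ Finset.Ico 1 j,
      (C₀ * (Np k:ℝ)^r * Real.exp (-ν * ((Np k:ℝ)^2 - (Np (k+1):ℝ)^2) * T (k+1))) := by
    intro j hj
    induction j with
    | zero => omega
    | succ i ih =>
      rcases Nat.eq_zero_or_pos i with rfl | hi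
      · simp
      · rw [Finset.prod_Ico_succ_top hi, ← mul_assoc, ← ih hi,
          hδrec i, hNe i hi, hNe (i+1) (by omega)]
        ring
  have hδnA : δ n = δ 1 * A := by rw [hδprod n hn, hAdef]
  have hδ1 : δ 1 = C₀ * M * (N₀:ℝ)^r *
      Real.exp (-ν * ((N₀:ℝ)^2 - (Np 1:ℝ)^2) * T 1) := by
    rw [hδrec 0, hδ0, hNe 1 le_rfl, hN0]
  refine ⟨N, δ, hδ0, fun k _ => hNpos k, ?_, fun k _ _ => hδpos k, ?_, ?_, ?_, ?_, ?_, ?_, ?_, ?_, ?_, ?_⟩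
  · -- N strictly decreasing
    intro k hk
    rcases Nat.eq_zero_or_pos k with rfl | hk1
    · rw [hN0, hNe 1 le_rfl]
      exact_mod_cast hx1
    · rw [hNe k hk1, hNe (k+1) (by omega)]
      exact (pairNp k hk1 hk).1
  · -- δ strictly decreasing
    intro k hk1 hkn
    have h4 := (pairNp k hk1 hkn).2.2.2
    rw [hδrec k, hNe k hk1, hNe (k+1) (by omega)]
    nlinarith [mul_lt_mul_of_pos_left h4 (hδpos k), hδpos k]
  · -- C₀ ≤ N n
    rw [hNe n hn]; exact hNpn
  · -- C₀ N_{k+1} ≤ N_k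
    intro k hk2 hkn1
    have hkn : k < n := by omega
    have h2 := (pairNp k (by omega) hkn).2.1
    have hm1 : (1:ℝ) ≤ (Np (k+1):ℝ) := by exact_mod_cast hNp1 (k+1)
    rw [hNe k (by omega), hNe (k+1) (by omega)]
    nlinarith [h2, hm1, hC0pos]
  · -- C₀ N₂² ≤ N₁
    rcases eq_or_lt_of_le hn with h1 | h2
    · have e2 : N 2 = 1 := by rw [hNe 2 (by omega), hNptop 2 (by omega)]
      have e1 : N 1 = Np n := by rw [hNe 1 le_rfl, ← h1]
      rw [e2, e1]
      push_cast
      nlinarith [hNpn]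
    · rw [hNe 1 le_rfl, hNe 2 (by omega)]
      exact (pairNp 1 le_rfl h2).2.1
  · -- C₀ N₁^((r-1)/2) ≤ N₀
    rw [hNe 1 le_rfl, hN0c]
    exact hx2.le
  · -- (ii)
    rw [hNe 1 le_rfl, hN0c, hδ1, Real.rpow_neg hx0pos.le, Real.rpow_natCast,
      ← one_div, le_div_iff₀ (pow_pos hx0pos r)]
    have h := hKii N₀ hx1R hxii.le
    calc C₀ * (C₀ * M * (N₀:ℝ)^r * Real.exp (-ν * ((N₀:ℝ)^2 - (Np 1:ℝ)^2) * T 1)) *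
          (Np 1:ℝ)^((r:ℝ)+1/2) * (N₀:ℝ)^r
        = (C₀^2 * M * (Np 1:ℝ)^((r:ℝ)+1/2)) *
            ((N₀:ℝ)^(2*r) * Real.exp (-ν * ((N₀:ℝ)^2 - (Np 1:ℝ)^2) * T 1)) := by ring
      _ ≤ (C₀^2 * M * (Np 1:ℝ)^((r:ℝ)+1/2)) *
            ((Real.exp (-(ν * T 1) * (Np 1:ℝ)^2) / (C₀^2 * M * (Np 1:ℝ)^((r:ℝ)+1/2)) *
              Real.exp (ν * T 1 * (N₀:ℝ)^2)) *
              Real.exp (-ν * ((N₀:ℝ)^2 - (Np 1:ℝ)^2) * T 1)) := by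
          refine mul_le_mul_of_nonneg_left ?_ (by positivity)
          exact mul_le_mul_of_nonneg_right h (Real.exp_pos _).le
      _ = Real.exp (-(ν * T 1) * (Np 1:ℝ)^2) * Real.exp (ν * T 1 * (N₀:ℝ)^2) *
            Real.exp (-ν * ((N₀:ℝ)^2 - (Np 1:ℝ)^2) * T 1) := by
          field_simp
      _ = 1 := by
          rw [← Real.exp_add, ← Real.exp_add,
            show -(ν * T 1) * (Np 1:ℝ)^2 + ν * T 1 * (N₀:ℝ)^2 +
              -ν * ((N₀:ℝ)^2 - (Np 1:ℝ)^2) * T 1 = 0 by ring, Real.exp_zero]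
  · -- (iii)
    rw [hNe 1 le_rfl, hδ1]
    have h := hKiii N₀ hx1R hxiii.le
    calc C₀ * (C₀ * M * (N₀:ℝ)^r * Real.exp (-ν * ((N₀:ℝ)^2 - (Np 1:ℝ)^2) * T 1)) *
          (Np 1:ℝ)^((r:ℝ)-1/2)
        = (C₀^2 * M * (Np 1:ℝ)^((r:ℝ)-1/2)) *
            ((N₀:ℝ)^r * Real.exp (-ν * ((N₀:ℝ)^2 - (Np 1:ℝ)^2) * T 1)) := by ring
      _ ≤ (C₀^2 * M * (Np 1:ℝ)^((r:ℝ)-1/2)) *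
            ((Real.exp (-(ν * T 1) * (Np 1:ℝ)^2) / (C₀^2 * M * (Np 1:ℝ)^((r:ℝ)-1/2)) *
              Real.exp (ν * T 1 * (N₀:ℝ)^2)) *
              Real.exp (-ν * ((N₀:ℝ)^2 - (Np 1:ℝ)^2) * T 1)) := by
          refine mul_le_mul_of_nonneg_left ?_ (by positivity)
          exact mul_le_mul_of_nonneg_right h (Real.exp_pos _).le
      _ = Real.exp (-(ν * T 1) * (Np 1:ℝ)^2) * Real.exp (ν * T 1 * (N₀:ℝ)^2) *
            Real.exp (-ν * ((N₀:ℝ)^2 - (Np 1:ℝ)^2) * T 1) := by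
          field_simp
      _ = 1 := by
          rw [← Real.exp_add, ← Real.exp_add,
            show -(ν * T 1) * (Np 1:ℝ)^2 + ν * T 1 * (N₀:ℝ)^2 +
              -ν * ((N₀:ℝ)^2 - (Np 1:ℝ)^2) * T 1 = 0 by ring, Real.exp_zero]
  · -- (iv)
    intro k hk1 hkn
    obtain ⟨j, rfl⟩ : ∃ j, k = j + 1 := ⟨k - 1, by omega⟩
    simp only [Nat.add_sub_cancel]
    rw [hδrec j, zpow_neg, zpow_natCast]
    have hNj : ((N j : ℕ) : ℝ) ≠ 0 := by
      have := hNpos j; positivity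
    apply le_of_eq
    field_simp
  · -- (v)
    intro k hk1 hkn1
    have hkn : k < n := by omega
    have h3 := (pairNp k hk1 hkn).2.2.1
    have hmpos : (0:ℝ) < (Np (k+1):ℝ) := by exact_mod_cast hNp1 (k+1)
    have hMpos : (0:ℝ) < (Np k:ℝ) := by exact_mod_cast hNp1 k
    rw [hδrec k, hNe k hk1, hNe (k+1) (by omega), zpow_neg, zpow_natCast]
    have hE : Real.exp (-ν * ((Np k:ℝ)^2 - (Np (k+1):ℝ)^2) * T (k+1)) *
        Real.exp (ν * ((Np k:ℝ)^2 - (Np (k+1):ℝ)^2) * T k) =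
        (Real.exp (ν * ((Np k:ℝ)^2 - (Np (k+1):ℝ)^2) * (T (k+1) - T k)))⁻¹ := by
      rw [← Real.exp_add, ← Real.exp_neg]; congr 1; ring
    calc C₀ * (C₀ * δ k * (Np k:ℝ)^r *
            Real.exp (-ν * ((Np k:ℝ)^2 - (Np (k+1):ℝ)^2) * T (k+1))) *
          Real.exp (ν * ((Np k:ℝ)^2 - (Np (k+1):ℝ)^2) * T k)
        = (C₀^2 * δ k * (Np k:ℝ)^r) *
            (Real.exp (-ν * ((Np k:ℝ)^2 - (Np (k+1):ℝ)^2) * T (k+1)) *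
             Real.exp (ν * ((Np k:ℝ)^2 - (Np (k+1):ℝ)^2) * T k)) := by ring
      _ = (C₀^2 * δ k * (Np k:ℝ)^r) *
            (Real.exp (ν * ((Np k:ℝ)^2 - (Np (k+1):ℝ)^2) * (T (k+1) - T k)))⁻¹ := by
          rw [hE]
      _ ≤ δ k * ((Np (k+1):ℝ)^r)⁻¹ := by
          rw [← div_eq_mul_inv, ← div_eq_mul_inv,
            div_le_div_iff₀ (Real.exp_pos _) (pow_pos hmpos r)]
          nlinarith [mul_le_mul_of_nonneg_left h3 (hδpos k).le]
  · -- (vi)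
    rw [hNe n hn, hNe 1 le_rfl, hN0c, hδnA, ← hBdef,
      show ((N₀:ℝ))^(-(2:ℤ)) = (((N₀:ℝ))^2)⁻¹ by rw [zpow_neg]; norm_cast]
    have hparta : C₀ * B * (((N₀:ℝ))^2)⁻¹ ≤ A/2 := by
      rw [← div_eq_mul_inv, div_le_iff₀ (by positivity : (0:ℝ) < (N₀:ℝ)^2)]
      have h1 : 2*C₀*B ≤ A * (N₀:ℝ) := by
        have h := hx3.le
        rw [div_le_iff₀ hApos] at h
        nlinarith
      have h2 : A * (N₀:ℝ) ≤ A * (N₀:ℝ)^2 := by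
        have hh : (N₀:ℝ) ≤ (N₀:ℝ)^2 := by nlinarith [hx1R]
        exact mul_le_mul_of_nonneg_left hh hApos.le
      linarith
    have hpartb : C₀ * B * (δ 1 * (N₀:ℝ)^(r+1) * (Np 1:ℝ)^(r+2)) ≤ A/2 := by
      have h := hKvi N₀ hx1R hxvi.le
      rw [hδ1]
      calc C₀ * B * (C₀ * M * (N₀:ℝ)^r *
              Real.exp (-ν * ((N₀:ℝ)^2 - (Np 1:ℝ)^2) * T 1) * (N₀:ℝ)^(r+1) * (Np 1:ℝ)^(r+2))
          = (2*C₀*B*C₀*M*(Np 1:ℝ)^(r+2)) / 2 *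
              ((N₀:ℝ)^(2*r+1) * Real.exp (-ν * ((N₀:ℝ)^2 - (Np 1:ℝ)^2) * T 1)) := by ring
        _ ≤ (2*C₀*B*C₀*M*(Np 1:ℝ)^(r+2)) / 2 *
              ((A * Real.exp (-(ν*(Np 1:ℝ)^2*T 1)) / (2*C₀*B*C₀*M*(Np 1:ℝ)^(r+2)) *
                Real.exp (ν * T 1 * (N₀:ℝ)^2)) *
                Real.exp (-ν * ((N₀:ℝ)^2 - (Np 1:ℝ)^2) * T 1)) := by
            refine mul_le_mul_of_nonneg_left ?_ (by positivity)
            exact mul_le_mul_of_nonneg_right h (Real.exp_pos _).le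
        _ = A/2 * (Real.exp (-(ν*(Np 1:ℝ)^2*T 1)) * Real.exp (ν * T 1 * (N₀:ℝ)^2) *
              Real.exp (-ν * ((N₀:ℝ)^2 - (Np 1:ℝ)^2) * T 1)) := by
            field_simp
        _ = A/2 * 1 := by
            rw [← Real.exp_add, ← Real.exp_add,
              show -(ν*(Np 1:ℝ)^2*T 1) + ν * T 1 * (N₀:ℝ)^2 +
                -ν * ((N₀:ℝ)^2 - (Np 1:ℝ)^2) * T 1 = 0 by ring, Real.exp_zero]
        _ = A/2 := mul_one _
    calc C₀ * B * (δ 1 * (((N₀:ℝ))^2)⁻¹ + δ 1^2 * (N₀:ℝ)^(r+1) * (Np 1:ℝ)^(r+2))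
        = δ 1 * (C₀ * B * (((N₀:ℝ))^2)⁻¹) +
            δ 1 * (C₀ * B * (δ 1 * (N₀:ℝ)^(r+1) * (Np 1:ℝ)^(r+2))) := by ring
      _ ≤ δ 1 * (A/2) + δ 1 * (A/2) :=
          add_le_add (mul_le_mul_of_nonneg_left hparta (hδpos 1).le)
            (mul_le_mul_of_nonneg_left hpartb (hδpos 1).le)
      _ = δ 1 * A := by ring
end
end

section
/- Let h : ℝ² → ℝ be a smooth function that is 2π-periodic in each variable, let ε > 0 and M > 0, and suppose φ : 𝕋³ → ℝ is a C² function solving Δφ = ∂₂h · sin(x₃ + εh) − ∂₁h · cos(x₃ + εh), where h and its derivatives are evaluated at (x₁,x₂). Define u₀ := M ( sin(x₃ + εh), cos(x₃ + εh), 0 ) + εM ∇φ. Then div u₀ = 0 and curl u₀ = ω₀, where ω₀(x) := M ( sin(x₃ + εh), cos(x₃ + εh), −ε ∂₁h · sin(x₃ + εh) − ε ∂₂h · cos(x₃ + εh) ). -/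
open MeasureTheory Real Set

noncomputable section

lemma pd_eq_of_hasFDerivAt {f : E3 → ℝ} {L : E3 →L[ℝ] ℝ} {x : E3}
    (hf : HasFDerivAt f L x) (j : Fin 3) : pd j f x = L (Pi.single j 1) := by
  simp [pd, hf.fderiv]

/-- the velocity field `u₀ = M(sin(x₃+εh), cos(x₃+εh), 0) + εM∇φ`,
with `Δφ = ∂₂h sin(x₃+εh) − ∂₁h cos(x₃+εh)`, is divergence-free and has vorticity
`curl u₀ = ω₀`. -/
theorem initial_velocity_divergence_free_and_vorticity
    (h : ℝ → ℝ → ℝ) (hh : ContDiff ℝ (⊤ : ℕ∞) (Function.uncurry h))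
    (hper1 : ∀ a b, h (a + 2 * Real.pi) b = h a b)
    (hper2 : ∀ a b, h a (b + 2 * Real.pi) = h a b)
    (ε M : ℝ) (hε : 0 < ε) (hM : 0 < M)
    (φ : E3 → ℝ) (hφ : ContDiff ℝ 2 φ)
    (hpois : ∀ x : E3, lap φ x =
      d2 h (x 0) (x 1) * Real.sin (x 2 + ε * h (x 0) (x 1))
        - d1 h (x 0) (x 1) * Real.cos (x 2 + ε * h (x 0) (x 1))) :
    letI u₀ : E3 → E3 := fun x =>
      M • ![Real.sin (x 2 + ε * h (x 0) (x 1)),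
            Real.cos (x 2 + ε * h (x 0) (x 1)), 0]
      + (ε * M) • ![pd 0 φ x, pd 1 φ x, pd 2 φ x]
    letI ω₀ : E3 → E3 := fun x =>
      M • ![Real.sin (x 2 + ε * h (x 0) (x 1)),
            Real.cos (x 2 + ε * h (x 0) (x 1)),
            -ε * d1 h (x 0) (x 1) * Real.sin (x 2 + ε * h (x 0) (x 1))
              - ε * d2 h (x 0) (x 1) * Real.cos (x 2 + ε * h (x 0) (x 1))]
    (∀ x, vdiv u₀ x = 0) ∧ (∀ x, vcurl u₀ x = ω₀ x) := by
  set u₀ : E3 → E3 := fun x =>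
      M • ![Real.sin (x 2 + ε * h (x 0) (x 1)),
            Real.cos (x 2 + ε * h (x 0) (x 1)), 0]
      + (ε * M) • ![pd 0 φ x, pd 1 φ x, pd 2 φ x] with hu₀def
  have hhd : Differentiable ℝ (Function.uncurry h) := hh.differentiable (by simp)
  set Dh : ℝ × ℝ → (ℝ × ℝ →L[ℝ] ℝ) := fun p => fderiv ℝ (Function.uncurry h) p with hDh
  -- d1 / d2 identities
  have hd1 : ∀ a b : ℝ, Dh (a, b) (1, 0) = d1 h a b := by
    intro a b
    have hinner : HasFDerivAt (fun y : ℝ => (y, b))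
        ((ContinuousLinearMap.id ℝ ℝ).prod 0) a :=
      HasFDerivAt.prodMk (hasFDerivAt_id a) (hasFDerivAt_const b a)
    have H := ((hhd (a, b)).hasFDerivAt.comp a hinner).hasDerivAt
    have H2 : HasDerivAt (fun y => h y b) (Dh (a, b) (1, 0)) a := by simpa [Function.comp_def] using H
    exact H2.deriv.symm
  have hd2 : ∀ a b : ℝ, Dh (a, b) (0, 1) = d2 h a b := by
    intro a b
    have hinner : HasFDerivAt (fun z : ℝ => (a, z))
        ((0 : ℝ →L[ℝ] ℝ).prod (ContinuousLinearMap.id ℝ ℝ)) b :=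
      HasFDerivAt.prodMk (hasFDerivAt_const a b) (hasFDerivAt_id b)
    have H := ((hhd (a, b)).hasFDerivAt.comp b hinner).hasDerivAt
    have H2 : HasDerivAt (fun z => h a z) (Dh (a, b) (0, 1)) b := by simpa [Function.comp_def] using H
    exact H2.deriv.symm
  -- derivative of the phase g
  set PL : E3 →L[ℝ] ℝ × ℝ :=
    (ContinuousLinearMap.proj 0).prod (ContinuousLinearMap.proj 1) with hPLdef
  set gL : E3 → (E3 →L[ℝ] ℝ) := fun x =>
    (ContinuousLinearMap.proj 2 : E3 →L[ℝ] ℝ) + ε • ((Dh (x 0, x 1)).comp PL) with hgL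
  have hg : ∀ x : E3, HasFDerivAt (fun y : E3 => y 2 + ε * h (y 0) (y 1)) (gL x) x := by
    intro x
    have hH : HasFDerivAt (fun y : E3 => h (y 0) (y 1)) ((Dh (x 0, x 1)).comp PL) x :=
      by have := (hhd (x 0, x 1)).hasFDerivAt.comp x PL.hasFDerivAt; exact this
    exact (ContinuousLinearMap.proj 2 : E3 →L[ℝ] ℝ).hasFDerivAt.add (hH.const_mul ε)
  have hPL0 : PL (Pi.single (0 : Fin 3) 1) = ((1 : ℝ), (0 : ℝ)) := by
    simp [hPLdef, Pi.single_apply]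
  have hPL1 : PL (Pi.single (1 : Fin 3) 1) = ((0 : ℝ), (1 : ℝ)) := by
    simp [hPLdef, Pi.single_apply]
  have hPL2 : PL (Pi.single (2 : Fin 3) 1) = ((0 : ℝ), (0 : ℝ)) := by
    simp [hPLdef, Pi.single_apply]
  have egL0 : ∀ x : E3, gL x (Pi.single 0 1) = ε * d1 h (x 0) (x 1) := by
    intro x
    simp [hgL, hPL0, hd1, Pi.single_apply]
  have egL1 : ∀ x : E3, gL x (Pi.single 1 1) = ε * d2 h (x 0) (x 1) := by
    intro x
    simp [hgL, hPL1, hd2, Pi.single_apply]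
  have egL2 : ∀ x : E3, gL x (Pi.single 2 1) = 1 := by
    intro x
    have : ((0 : ℝ), (0 : ℝ)) = (0 : ℝ × ℝ) := rfl
    simp [hgL, hPL2, this, Pi.single_apply]
  -- trig compositions
  have hsin : ∀ x : E3, HasFDerivAt (fun y : E3 => Real.sin (y 2 + ε * h (y 0) (y 1)))
      (Real.cos (x 2 + ε * h (x 0) (x 1)) • gL x) x := fun x =>
    (Real.hasDerivAt_sin _).comp_hasFDerivAt x (hg x)
  have hcos : ∀ x : E3, HasFDerivAt (fun y : E3 => Real.cos (y 2 + ε * h (y 0) (y 1)))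
      ((-Real.sin (x 2 + ε * h (x 0) (x 1))) • gL x) x := fun x =>
    (Real.hasDerivAt_cos _).comp_hasFDerivAt x (hg x)
  -- second derivatives of φ
  have hφd : ∀ y, HasFDerivAt φ (fderiv ℝ φ y) y := fun y =>
    (hφ.differentiable (by norm_num) y).hasFDerivAt
  have hφ1 : ContDiff ℝ 1 (fderiv ℝ φ) := hφ.fderiv_right (by norm_num)
  have hFd : ∀ x : E3, DifferentiableAt ℝ (fderiv ℝ φ) x := fun x =>
    hφ1.differentiable (by norm_num) x
  set Φ : E3 → (E3 →L[ℝ] E3 →L[ℝ] ℝ) := fun x => fderiv ℝ (fderiv ℝ φ) x with hΦ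
  have hsymm : ∀ (x : E3) (v w : E3), Φ x v w = Φ x w v := fun x =>
    second_derivative_symmetric hφd (hFd x).hasFDerivAt
  have hpdφ : ∀ (i : Fin 3) (x : E3), HasFDerivAt (pd i φ)
      ((fderiv ℝ φ x).comp (0 : E3 →L[ℝ] E3) + (Φ x).flip (Pi.single i 1)) x := fun i x =>
    (hFd x).hasFDerivAt.clm_apply (hasFDerivAt_const _ _)
  have hpdpd : ∀ (i j : Fin 3) (x : E3),
      pd j (pd i φ) x = Φ x (Pi.single j 1) (Pi.single i 1) := by
    intro i j x
    rw [pd_eq_of_hasFDerivAt (hpdφ i x) j]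
    simp
  -- component functions of u₀
  have hc0 : (fun y : E3 => u₀ y 0)
      = fun y : E3 => M * Real.sin (y 2 + ε * h (y 0) (y 1)) + ε * M * pd 0 φ y := by
    funext y
    show (M • ![Real.sin (y 2 + ε * h (y 0) (y 1)), Real.cos (y 2 + ε * h (y 0) (y 1)), 0]
        + (ε * M) • ![pd 0 φ y, pd 1 φ y, pd 2 φ y]) 0 = _
    simp
  have hc1 : (fun y : E3 => u₀ y 1)
      = fun y : E3 => M * Real.cos (y 2 + ε * h (y 0) (y 1)) + ε * M * pd 1 φ y := by
    funext y
    show (M • ![Real.sin (y 2 + ε * h (y 0) (y 1)), Real.cos (y 2 + ε * h (y 0) (y 1)), 0]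
        + (ε * M) • ![pd 0 φ y, pd 1 φ y, pd 2 φ y]) 1 = _
    simp
  have hc2 : (fun y : E3 => u₀ y 2) = fun y : E3 => ε * M * pd 2 φ y := by
    funext y
    show (M • ![Real.sin (y 2 + ε * h (y 0) (y 1)), Real.cos (y 2 + ε * h (y 0) (y 1)), 0]
        + (ε * M) • ![pd 0 φ y, pd 1 φ y, pd 2 φ y]) 2 = _
    simp
  -- derivatives of the components
  have hD0 : ∀ (j : Fin 3) (x : E3), pd j (fun y : E3 => u₀ y 0) x
      = M * (Real.cos (x 2 + ε * h (x 0) (x 1)) * gL x (Pi.single j 1))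
        + ε * M * Φ x (Pi.single j 1) (Pi.single 0 1) := by
    intro j x
    rw [hc0, pd_eq_of_hasFDerivAt (((hsin x).const_mul M).fun_add ((hpdφ 0 x).const_mul (ε * M))) j]
    simp
  have hD1 : ∀ (j : Fin 3) (x : E3), pd j (fun y : E3 => u₀ y 1) x
      = M * (-Real.sin (x 2 + ε * h (x 0) (x 1)) * gL x (Pi.single j 1))
        + ε * M * Φ x (Pi.single j 1) (Pi.single 1 1) := by
    intro j x
    rw [hc1, pd_eq_of_hasFDerivAt (((hcos x).const_mul M).fun_add ((hpdφ 1 x).const_mul (ε * M))) j]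
    simp
  have hD2 : ∀ (j : Fin 3) (x : E3), pd j (fun y : E3 => u₀ y 2) x
      = ε * M * Φ x (Pi.single j 1) (Pi.single 2 1) := by
    intro j x
    rw [hc2, pd_eq_of_hasFDerivAt ((hpdφ 2 x).const_mul (ε * M)) j]
    simp
  -- Poisson equation rewritten
  have hlap : ∀ x : E3, Φ x (Pi.single 0 1) (Pi.single 0 1) + Φ x (Pi.single 1 1) (Pi.single 1 1)
      + Φ x (Pi.single 2 1) (Pi.single 2 1)
      = d2 h (x 0) (x 1) * Real.sin (x 2 + ε * h (x 0) (x 1))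
        - d1 h (x 0) (x 1) * Real.cos (x 2 + ε * h (x 0) (x 1)) := by
    intro x
    rw [← hpois x]
    show _ = ∑ j : Fin 3, pd j (pd j φ) x
    rw [Fin.sum_univ_three, hpdpd 0 0 x, hpdpd 1 1 x, hpdpd 2 2 x]
  constructor
  · intro x
    show (∑ j : Fin 3, pd j (fun y => u₀ y j) x) = 0
    rw [Fin.sum_univ_three, hD0 0 x, hD1 1 x, hD2 2 x, egL0 x, egL1 x]
    linear_combination (ε * M) * hlap x
  · intro x
    funext i
    fin_cases i
    · show pd 1 (fun y => u₀ y 2) x - pd 2 (fun y => u₀ y 1) x = _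
      rw [hD2 1 x, hD1 2 x, egL2 x, hsymm x (Pi.single 1 1) (Pi.single 2 1)]
      show _ = (M • ![Real.sin (x 2 + ε * h (x 0) (x 1)), Real.cos (x 2 + ε * h (x 0) (x 1)),
            -ε * d1 h (x 0) (x 1) * Real.sin (x 2 + ε * h (x 0) (x 1))
              - ε * d2 h (x 0) (x 1) * Real.cos (x 2 + ε * h (x 0) (x 1))]) 0
      simp
    · show pd 2 (fun y => u₀ y 0) x - pd 0 (fun y => u₀ y 2) x = _
      rw [hD0 2 x, hD2 0 x, egL2 x, hsymm x (Pi.single 2 1) (Pi.single 0 1)]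
      show _ = (M • ![Real.sin (x 2 + ε * h (x 0) (x 1)), Real.cos (x 2 + ε * h (x 0) (x 1)),
            -ε * d1 h (x 0) (x 1) * Real.sin (x 2 + ε * h (x 0) (x 1))
              - ε * d2 h (x 0) (x 1) * Real.cos (x 2 + ε * h (x 0) (x 1))]) 1
      simp
    · show pd 0 (fun y => u₀ y 1) x - pd 1 (fun y => u₀ y 0) x = _
      rw [hD1 0 x, hD0 1 x, egL0 x, egL1 x, hsymm x (Pi.single 0 1) (Pi.single 1 1)]
      show _ = (M • ![Real.sin (x 2 + ε * h (x 0) (x 1)), Real.cos (x 2 + ε * h (x 0) (x 1)),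
            -ε * d1 h (x 0) (x 1) * Real.sin (x 2 + ε * h (x 0) (x 1))
              - ε * d2 h (x 0) (x 1) * Real.cos (x 2 + ε * h (x 0) (x 1))]) 2
      simp; ring
end
end
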